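/- arXiv:1911.04783 — 3 statements merged into one kernel-verified Lean document; each statement's English description precedes it below -/
import Mathlib

section
/- For any labelled digraph stacks S and T on Ω, the permutations inducing isomorphisms between the stacks coincide with those inducing isomorphisms between their squashed labelled digraphs: Iso(S, T) = Iso(Squash(S), Squash(T)). -/
attribute [local instance] Classical.propDecidable

/-- A (vertex- and arc-)labelled digraph on vertex set `Ω` with labels in `L`.
The arcs are the pairs on which `alabel` is not `none`. -/
structure LDigraph (Ω : Type*) (L : Type*) where
  vlabel : Ω → L
  alabel : Ω × Ω → Option L

namespace LDigraph

variable {Ω L : Type*}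

/-- The action of `Sym(Ω)` on labelled digraphs: `Γ.act g` is `Γ^g`. -/
def act (Γ : LDigraph Ω L) (g : Equiv.Perm Ω) : LDigraph Ω L where
  vlabel := fun δ => Γ.vlabel (g⁻¹ δ)
  alabel := fun p => Γ.alabel (g⁻¹ p.1, g⁻¹ p.2)

/-- The set of arcs of a labelled digraph. -/
def arcs (Γ : LDigraph Ω L) : Set (Ω × Ω) := {p | Γ.alabel p ≠ none}

/-- The set of permutations inducing an isomorphism from `Γ` to `Δ`. -/
def Iso (Γ Δ : LDigraph Ω L) : Set (Equiv.Perm Ω) := {g | Γ.act g = Δ}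

end LDigraph

/-- A labelled digraph stack on `Ω`: a finite list of labelled digraphs on `Ω`. -/
abbrev Stack (Ω L : Type*) := List (LDigraph Ω L)

namespace Stack

variable {Ω L : Type*}

/-- Entrywise action of `Sym(Ω)` on labelled digraph stacks. -/
def act (S : Stack Ω L) (g : Equiv.Perm Ω) : Stack Ω L := S.map (fun Γ => Γ.act g)

/-- The set of permutations inducing an isomorphism from the stack `S` to the stack `T`. -/
def Iso (S T : Stack Ω L) : Set (Equiv.Perm Ω) := {g | Stack.act S g = T}

/-- The squashed labelled digraph of a stack: arcs are the union of the arcs;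
a vertex label is the list of the vertex labels; an arc label is the list of
the arc labels, with `none` (the symbol `#`) for missing arcs. -/
noncomputable def squash (S : Stack Ω L) : LDigraph Ω (List (Option L)) where
  vlabel := fun δ => S.map (fun Γ => some (Γ.vlabel δ))
  alabel := fun p =>
    if ∀ Γ ∈ S, Γ.alabel p = none then none
    else some (S.map (fun Γ => Γ.alabel p))

end Stack

/-- `(fL, fR)` is a refiner for `U ⊆ Sym(Ω)`:
for all isomorphic stacks `S`, `T`, `U ∩ Iso(S,T) ⊆ U ∩ Iso(fL S, fR T)`. -/
def IsRefiner {Ω L : Type*} (U : Set (Equiv.Perm Ω))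
    (fL fR : Stack Ω L → Stack Ω L) : Prop :=
  ∀ S T : Stack Ω L, (Stack.Iso S T).Nonempty →
    U ∩ Stack.Iso S T ⊆ U ∩ Stack.Iso (fL S) (fR T)

/-!
Squashing commutes with the action of `Sym(Ω)`, and it is injective as soon as `Ω` has a
vertex: the vertex label of any vertex is a list of length `|S|`, and once the length is known,
the arc label of `(α, β)` in `Squash(S)` (with `#` read as `[#, …, #]`) lists the arc labels of
`(α, β)` in every layer. Hence `S^g = T` iff `Squash(S)^g = Squash(S^g) = Squash(T)`.
-/

attribute [ext] LDigraph

namespace Stack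

variable {Ω L : Type*}

theorem squash_act (S : Stack Ω L) (g : Equiv.Perm Ω) :
    squash (S.act g) = (squash S).act g := by
  simp [squash, act, LDigraph.act, Function.comp_def]

theorem squash_alabel_getD (S : Stack Ω L) (p : Ω × Ω) :
    ((squash S).alabel p).getD (List.replicate S.length none) = S.map (·.alabel p) := by
  by_cases h : ∀ Γ ∈ S, Γ.alabel p = none
  · simp only [squash, if_pos h, Option.getD_none]
    exact (List.eq_replicate_iff.mpr ⟨List.length_map _, by simpa using h⟩).symm
  · simp [squash, if_neg h]

theorem squash_injective [Nonempty Ω] : Function.Injective (squash : Stack Ω L → _) := by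
  intro S T h
  have hv (δ : Ω) : S.map (fun Γ => some (Γ.vlabel δ)) = T.map (fun Γ => some (Γ.vlabel δ)) :=
    congrFun (congrArg LDigraph.vlabel h) δ
  have hlen : S.length = T.length := by
    simpa using congrArg List.length (hv (Classical.arbitrary Ω))
  have ha (p : Ω × Ω) : S.map (·.alabel p) = T.map (·.alabel p) := by
    rw [← squash_alabel_getD, ← squash_alabel_getD, h, hlen]
  refine List.ext_getElem hlen fun n hS hT => LDigraph.ext ?_ ?_
  · funext δ
    simpa [hS, hT] using congrArg (·[n]?) (hv δ)
  · funext p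
    simpa [hS, hT] using congrArg (·[n]?) (ha p)

end Stack

theorem stmt7_general {Ω L : Type*} [Nonempty Ω] (S T : Stack Ω L) :
    Stack.Iso S T = LDigraph.Iso (Stack.squash S) (Stack.squash T) := by
  ext g
  change S.act g = T ↔ (Stack.squash S).act g = Stack.squash T
  rw [← Stack.squash_act, Stack.squash_injective.eq_iff]

/-- For any labelled digraph stacks `S` and `T` on `Ω`, the permutations inducing
isomorphisms between the stacks are exactly those inducing isomorphisms between
their squashed labelled digraphs: `Iso(S, T) = Iso(Squash(S), Squash(T))`. -/
theorem stmt7 {Ω L : Type*} [Finite Ω] [Nonempty Ω] (S T : Stack Ω L) :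
    Stack.Iso S T = LDigraph.Iso (Stack.squash S) (Stack.squash T) :=
  stmt7_general S T
end

section
/- Let U ⊆ Sym(Ω) be non-empty, h ∈ U, and f, g functions on labelled digraph stacks. Then (f, g) is a refiner for U if and only if (f, f) is a refiner for Uh⁻¹ and g(S) = f(S^{h⁻¹})^h for all stacks S. In particular, for a subgroup G and coset Gh: (f, g) is a refiner for Gh iff (f, f) is a refiner for G and g(S) = f(S^{h⁻¹})^h. -/
attribute [local instance] Classical.propDecidable

namespace LDigraph

variable {Ω L : Type*}

theorem act_act (Γ : LDigraph Ω L) (a b : Equiv.Perm Ω) : (Γ.act a).act b = Γ.act (b * a) :=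
  rfl

theorem act_one (Γ : LDigraph Ω L) : Γ.act 1 = Γ :=
  rfl

end LDigraph

namespace Stack

variable {Ω L : Type*}

theorem act_act (S : Stack Ω L) (a b : Equiv.Perm Ω) : (S.act a).act b = S.act (b * a) := by
  simp only [Stack.act, List.map_map, Function.comp_def, LDigraph.act_act]

theorem act_one (S : Stack Ω L) : S.act 1 = S := by
  simp only [Stack.act, LDigraph.act_one, List.map_id']

theorem act_act_inv (S : Stack Ω L) (g : Equiv.Perm Ω) : (S.act g).act g⁻¹ = S := by
  rw [act_act, inv_mul_cancel, act_one]

theorem mem_iso {S T : Stack Ω L} {g : Equiv.Perm Ω} : g ∈ Stack.Iso S T ↔ S.act g = T :=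
  Iff.rfl

end Stack

section Refiner

variable {Ω L : Type*} {V : Set (Equiv.Perm Ω)} {h : Equiv.Perm Ω} {f g : Stack Ω L → Stack Ω L}

theorem IsRefiner.apply_eq_act (hR : IsRefiner V f g) (hh : h ∈ V) (S : Stack Ω L) :
    g S = (f (S.act h⁻¹)).act h := by
  have hiso : h ∈ Stack.Iso (S.act h⁻¹) S := by
    rw [Stack.mem_iso, Stack.act_act, mul_inv_cancel, Stack.act_one]
  exact (hR _ S ⟨h, hiso⟩ ⟨hh, hiso⟩).2.symm

theorem isRefiner_iff_image_inv_mul (hg : ∀ S, g S = (f (S.act h⁻¹)).act h) :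
    IsRefiner V f g ↔ IsRefiner ((fun u => h⁻¹ * u) '' V) f f := by
  constructor
  · rintro hR S T - _ ⟨⟨u, hu, rfl⟩, hST⟩
    have hiso : u ∈ Stack.Iso S (T.act h) := by
      rw [Stack.mem_iso, ← hST, Stack.act_act, mul_inv_cancel_left]
    have hf : (f S).act u = (f T).act h := by
      rw [(hR S _ ⟨u, hiso⟩ ⟨hu, hiso⟩).2, hg, Stack.act_act_inv]
    refine ⟨⟨u, hu, rfl⟩, ?_⟩
    rw [Stack.mem_iso, ← Stack.act_act, hf, Stack.act_act_inv]
  · rintro hR S T - u ⟨hu, hST⟩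
    have hiso : h⁻¹ * u ∈ Stack.Iso S (T.act h⁻¹) := by
      rw [Stack.mem_iso, ← Stack.act_act, Stack.mem_iso.1 hST]
    have hf := Stack.mem_iso.1 (hR S _ ⟨_, hiso⟩ ⟨⟨u, hu, rfl⟩, hiso⟩).2
    refine ⟨hu, ?_⟩
    rw [Stack.mem_iso, hg, ← hf, Stack.act_act, mul_inv_cancel_left]

theorem isRefiner_iff_of_mem (hh : h ∈ V) :
    IsRefiner V f g ↔
      IsRefiner ((fun u => h⁻¹ * u) '' V) f f ∧ ∀ S, g S = (f (S.act h⁻¹)).act h :=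
  ⟨fun hR => ⟨(isRefiner_iff_image_inv_mul (hR.apply_eq_act hh)).1 hR, hR.apply_eq_act hh⟩,
    fun ⟨hR, hg⟩ => (isRefiner_iff_image_inv_mul hg).2 hR⟩

end Refiner

/- In the paper's convention the product `uh⁻¹` means "first `u`, then `h⁻¹`",
so `Uh⁻¹ = {h⁻¹ * u : u ∈ U}` and `Gh = {h * a : a ∈ G}` in Lean. -/
theorem stmt12_general {Ω L : Type*} (U : Set (Equiv.Perm Ω))
    (h : Equiv.Perm Ω) (hh : h ∈ U) (f g : Stack Ω L → Stack Ω L) :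
    (IsRefiner U f g ↔
      (IsRefiner ((fun u => h⁻¹ * u) '' U) f f ∧
        ∀ S : Stack Ω L, g S = Stack.act (f (Stack.act S h⁻¹)) h)) ∧
    (∀ G : Subgroup (Equiv.Perm Ω),
      U = (fun a => h * a) '' (G : Set (Equiv.Perm Ω)) →
      (IsRefiner U f g ↔
        (IsRefiner ((G : Set (Equiv.Perm Ω))) f f ∧
          ∀ S : Stack Ω L, g S = Stack.act (f (Stack.act S h⁻¹)) h))) := by
  refine ⟨isRefiner_iff_of_mem hh, fun G hG => ?_⟩
  have hcoset : (fun u => h⁻¹ * u) '' U = G := by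
    simp only [hG, Set.image_image, inv_mul_cancel_left, Set.image_id']
  rw [isRefiner_iff_of_mem hh, hcoset]

/-- Let `U ⊆ Sym(Ω)` be non-empty and `h ∈ U`.  Then `(f, g)` is a refiner for `U`
iff `(f, f)` is a refiner for `Uh⁻¹` and `g(S) = f(S^{h⁻¹})^h` for all stacks `S`.
In particular, for a subgroup `G` and the right coset `U = Gh`, `(f, g)` is a
refiner for `Gh` iff `(f, f)` is a refiner for `G` and `g(S) = f(S^{h⁻¹})^h`.
(In the paper's convention the product `uh⁻¹` means "first `u`, then `h⁻¹`",
so `Uh⁻¹ = {h⁻¹ * u : u ∈ U}` and `Gh = {h * a : a ∈ G}` in Lean.) -/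
theorem stmt12 {Ω L : Type*} [Finite Ω] (U : Set (Equiv.Perm Ω)) (hUne : U.Nonempty)
    (h : Equiv.Perm Ω) (hh : h ∈ U) (f g : Stack Ω L → Stack Ω L) :
    (IsRefiner U f g ↔
      (IsRefiner ((fun u => h⁻¹ * u) '' U) f f ∧
        ∀ S : Stack Ω L, g S = Stack.act (f (Stack.act S h⁻¹)) h)) ∧
    (∀ G : Subgroup (Equiv.Perm Ω),
      U = (fun a => h * a) '' (G : Set (Equiv.Perm Ω)) →
      (IsRefiner U f g ↔
        (IsRefiner ((G : Set (Equiv.Perm Ω))) f f ∧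
          ∀ S : Stack Ω L, g S = Stack.act (f (Stack.act S h⁻¹)) h))) :=
  stmt12_general U h hh f g
end

section
/- Let Approx be an isomorphism approximator and f a function on labelled digraph stacks such that whenever |Approx(S,S)| ≥ 2 one has |Approx(S ∥ f(S), S ∥ f(S))| < |Approx(S,S)|. For stacks S, T with |Approx(S,T)| ≥ 2, let T₁,…,T_m be an enumeration of {f(S)^g : g ∈ Approx(S,T)} (with T₁ = f(S) when S = T), and define Split(S,T) = [(f(S), T₁), …, (f(S), T_m)]. Then Iso(S,T) is the disjoint union of the sets Iso(S ∥ f(S), T ∥ T_i) over i = 1,…,m, and each |Approx(S ∥ f(S), T ∥ T_i)| < |Approx(S,T)|. -/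
attribute [local instance] Classical.propDecidable

/-!
Every isomorphism `g : S → T` lies in `Approx(S,T)`, so `f(S)^g` is one of the `Tᵢ`, and `g` is
an isomorphism `S ∥ f(S) → T ∥ f(S)^g`; since the image of a stack under `g` is determined by `g`,
the pieces are disjoint. Non-empty values of `Approx` are cosets of `Approx(S,S)` and so have its
size; hence `|Approx(S ∥ f S, T ∥ Tᵢ)| ≤ |Approx(S ∥ f S, S ∥ f S)| < |Approx(S,S)| = |Approx(S,T)|`.
-/

namespace Stack

variable {Ω L : Type*}

@[simp]
lemma length_act (S : Stack Ω L) (g : Equiv.Perm Ω) : (S.act g).length = S.length :=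
  List.length_map _

lemma act_append (S A : Stack Ω L) (g : Equiv.Perm Ω) :
    (S ++ A).act g = S.act g ++ A.act g :=
  List.map_append

lemma iso_append {S T A B : Stack Ω L} (h : A.length = B.length) :
    Iso (S ++ A) (T ++ B) = Iso S T ∩ Iso A B := by
  ext g
  simp only [Iso, Set.mem_inter_iff, Set.mem_ofPred_eq, act_append]
  exact ⟨fun hg => List.append_inj' hg (by rw [length_act, h]), fun ⟨h₁, h₂⟩ => h₁ ▸ h₂ ▸ rfl⟩

lemma mem_iso_append_act {S T : Stack Ω L} {g : Equiv.Perm Ω} (hg : g ∈ Iso S T)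
    (A : Stack Ω L) : g ∈ Iso (S ++ A) (T ++ A.act g) := by
  rw [iso_append (length_act A g).symm]
  exact ⟨hg, rfl⟩

lemma disjoint_iso_of_ne {S T T' : Stack Ω L} (h : T ≠ T') : Disjoint (Iso S T) (Iso S T') :=
  Set.disjoint_left.2 fun _ hT hT' => h (hT.symm.trans hT')

end Stack

section CosetValued

variable {α G : Type*} [Group G] {A : α → α → Set G}

lemma ncard_eq_ncard_self_of_nonempty
    (hA : ∀ S T, (A S T).Nonempty → ∃ h : G, A S T = (fun a => h * a) '' A S S)
    {S T : α} (hST : (A S T).Nonempty) : (A S T).ncard = (A S S).ncard := by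
  obtain ⟨h, hh⟩ := hA S T hST
  rw [hh, Set.ncard_image_of_injective _ (mul_right_injective h)]

lemma ncard_le_ncard_self
    (hA : ∀ S T, (A S T).Nonempty → ∃ h : G, A S T = (fun a => h * a) '' A S S) (S T : α) :
    (A S T).ncard ≤ (A S S).ncard := by
  rcases (A S T).eq_empty_or_nonempty with hST | hST
  · simp [hST]
  · exact (ncard_eq_ncard_self_of_nonempty hA hST).le

end CosetValued

theorem stmt18_general {Ω L : Type*}
    (Approx : Stack Ω L → Stack Ω L → Set (Equiv.Perm Ω))
    (hA1 : ∀ S T : Stack Ω L, Stack.Iso S T ⊆ Approx S T)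
    (hA3 : ∀ S T : Stack Ω L, (Approx S T).Nonempty →
      ∃ h : Equiv.Perm Ω, Approx S T = (fun a => h * a) '' Approx S S)
    (f : Stack Ω L → Stack Ω L)
    (hf : ∀ S : Stack Ω L, 2 ≤ (Approx S S).ncard →
      (Approx (S ++ f S) (S ++ f S)).ncard < (Approx S S).ncard)
    (S T : Stack Ω L) (hST : 2 ≤ (Approx S T).ncard)
    (Ts : List (Stack Ω L))
    (hTs : ∀ X : Stack Ω L, X ∈ Ts ↔ ∃ g ∈ Approx S T, Stack.act (f S) g = X) :
    Stack.Iso S T = (⋃ X ∈ Ts, Stack.Iso (S ++ f S) (T ++ X)) ∧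
    (∀ X ∈ Ts, ∀ Y ∈ Ts, X ≠ Y →
      Disjoint (Stack.Iso (S ++ f S) (T ++ X)) (Stack.Iso (S ++ f S) (T ++ Y))) ∧
    (∀ X ∈ Ts, (Approx (S ++ f S) (T ++ X)).ncard < (Approx S T).ncard) := by
  refine ⟨?_, fun X _ Y _ hXY => Stack.disjoint_iso_of_ne (mt List.append_cancel_left hXY), ?_⟩
  · ext g
    simp only [Set.mem_iUnion, exists_prop]
    constructor
    · intro hg
      exact ⟨_, (hTs _).2 ⟨g, hA1 S T hg, rfl⟩, Stack.mem_iso_append_act hg (f S)⟩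
    · rintro ⟨X, hX, hg⟩
      obtain ⟨g', -, rfl⟩ := (hTs X).1 hX
      rw [Stack.iso_append (Stack.length_act _ _).symm] at hg
      exact hg.1
  · intro X _
    have hSS := ncard_eq_ncard_self_of_nonempty hA3
      (Set.nonempty_of_ncard_ne_zero (by omega : (Approx S T).ncard ≠ 0))
    calc (Approx (S ++ f S) (T ++ X)).ncard
        ≤ (Approx (S ++ f S) (S ++ f S)).ncard := ncard_le_ncard_self hA3 _ _
      _ < (Approx S S).ncard := hf S (hSS ▸ hST)
      _ = (Approx S T).ncard := hSS.symm

/-- Splitters from orbit enumeration (Lemma `lem-splitter-creator`): let `Approx` be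
an isomorphism approximator (it contains `Iso`, is `∅` for stacks of unequal length,
and each non-empty value is a right coset `Approx(S,S)·h = {h * a : a ∈ Approx(S,S)}`
of `Approx(S,S)`), and let `f` satisfy: if `|Approx(S,S)| ≥ 2` then
`|Approx(S ∥ f S, S ∥ f S)| < |Approx(S,S)|`.  If `|Approx(S,T)| ≥ 2` and
`T₁,…,T_m` enumerates `{f(S)^g : g ∈ Approx(S,T)}` (with `T₁ = f S` when `S = T`),
then `Iso(S,T)` is the disjoint union of the sets `Iso(S ∥ f S, T ∥ Tᵢ)`, and each
`|Approx(S ∥ f S, T ∥ Tᵢ)| < |Approx(S,T)|`. -/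
theorem stmt18 {Ω L : Type*} [Finite Ω]
    (Approx : Stack Ω L → Stack Ω L → Set (Equiv.Perm Ω))
    (hA1 : ∀ S T : Stack Ω L, Stack.Iso S T ⊆ Approx S T)
    (hA2 : ∀ S T : Stack Ω L, S.length ≠ T.length → Approx S T = ∅)
    (hA3 : ∀ S T : Stack Ω L, (Approx S T).Nonempty →
      ∃ h : Equiv.Perm Ω, Approx S T = (fun a => h * a) '' Approx S S)
    (f : Stack Ω L → Stack Ω L)
    (hf : ∀ S : Stack Ω L, 2 ≤ (Approx S S).ncard →
      (Approx (S ++ f S) (S ++ f S)).ncard < (Approx S S).ncard)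
    (S T : Stack Ω L) (hST : 2 ≤ (Approx S T).ncard)
    (Ts : List (Stack Ω L)) (hTsNodup : Ts.Nodup)
    (hTs : ∀ X : Stack Ω L, X ∈ Ts ↔ ∃ g ∈ Approx S T, Stack.act (f S) g = X)
    (hTs1 : S = T → Ts.head? = some (f S)) :
    Stack.Iso S T = (⋃ X ∈ Ts, Stack.Iso (S ++ f S) (T ++ X)) ∧
    (∀ X ∈ Ts, ∀ Y ∈ Ts, X ≠ Y →
      Disjoint (Stack.Iso (S ++ f S) (T ++ X)) (Stack.Iso (S ++ f S) (T ++ Y))) ∧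
    (∀ X ∈ Ts, (Approx (S ++ f S) (T ++ X)).ncard < (Approx S T).ncard) :=
  stmt18_general Approx hA1 hA3 f hf S T hST Ts hTs
end
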